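/- Consider n ≥ 2 players with continuous-path win-probability martingales p^{(i)}_t summing to 1, initial values p^{(i)}_0 ∈ (0,1), and terminal indicators Y^{(i)} with exactly one winner. Let M_ω = inf_t p^{(i)}_t on {Y^{(i)} = 1}. Then for x ∈ [0, max_i p^{(i)}_0), P(M_ω ≤ x) = Σ_{i : p^{(i)}_0 ≤ x} p^{(i)}_0 + (x/(1−x)) · Σ_{i : x < p^{(i)}_0} (1 − p^{(i)}_0), and P(M_ω ≤ x) = 1 for x ≥ max_i p^{(i)}_0. -/

import Mathlib

open MeasureTheory ProbabilityTheory unitInterval Filter Topology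

namespace Stmt12Aux

/-- dyadic grid point `k / 2^N` clamped to `[0,1]`. -/
noncomputable def dy (N k : ℕ) : unitInterval :=
  ⟨min ((k : ℝ) / 2 ^ N) 1, ⟨le_min (by positivity) zero_le_one, min_le_right _ _⟩⟩

lemma dy_coe {N k : ℕ} (h : (k : ℝ) / 2 ^ N ≤ 1) : (dy N k : ℝ) = (k : ℝ) / 2 ^ N :=
  min_eq_left h

lemma dy_coe_of_le {N k : ℕ} (h : k ≤ 2 ^ N) : (dy N k : ℝ) = (k : ℝ) / 2 ^ N := by
  apply dy_coe
  rw [div_le_one (by positivity)]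
  exact_mod_cast (by exact_mod_cast h : (k : ℝ) ≤ (2 ^ N : ℕ))

lemma dy_zero (N : ℕ) : dy N 0 = 0 := by
  apply Subtype.ext
  simp [dy]

lemma dy_last (N : ℕ) : dy N (2 ^ N) = 1 := by
  apply Subtype.ext
  have : ((2 ^ N : ℕ) : ℝ) / 2 ^ N = 1 := by
    rw [div_eq_one_iff_eq (by positivity)]; push_cast; ring
  simp [dy, this]

lemma dy_mono (N : ℕ) : Monotone (dy N) := by
  intro k l hkl
  show (dy N k : ℝ) ≤ (dy N l : ℝ)
  exact min_le_min (by gcongr <;> exact_mod_cast hkl) le_rfl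

lemma dy_refine (N k : ℕ) : dy N k = dy (N + 1) (2 * k) := by
  apply Subtype.ext
  have : ((2 * k : ℕ) : ℝ) / 2 ^ (N + 1) = (k : ℝ) / 2 ^ N := by
    push_cast; rw [pow_succ]; ring_nf
  simp only [dy, this]

lemma dy_dist {N k : ℕ} (hk1 : 1 ≤ k) (hk : k ≤ 2 ^ N) :
    dist (dy N (k - 1)) (dy N k) = 1 / 2 ^ N := by
  rw [Subtype.dist_eq, Real.dist_eq, dy_coe_of_le hk, dy_coe_of_le ((Nat.sub_le k 1).trans hk)]
  rw [Nat.cast_sub hk1]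
  rw [abs_of_nonpos (by rw [sub_nonpos]; gcongr; simp)]
  push_cast
  ring

variable {Ω : Type*} {m0 : MeasurableSpace Ω}

/-- hit `(-∞, y]` on the dyadic grid of level `N` -/
def AN (f : unitInterval → Ω → ℝ) (y : ℝ) (N : ℕ) : Set Ω :=
  {ω | ∃ k ≤ 2 ^ N, f (dy N k) ω ≤ y}

/-- hit `(-∞, y]` at some dyadic time -/
def ASet (f : unitInterval → Ω → ℝ) (y : ℝ) : Set Ω := ⋃ N, AN f y N

lemma AN_mono (f : unitInterval → Ω → ℝ) (y : ℝ) : Monotone (AN f y) := by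
  apply monotone_nat_of_le_succ
  rintro N ω ⟨k, hk, h⟩
  exact ⟨2 * k, by calc 2 * k ≤ 2 * 2 ^ N := by omega
                      _ = 2 ^ (N + 1) := (pow_succ' 2 N).symm,
    by rwa [← dy_refine]⟩

lemma measurableSet_AN {f : unitInterval → Ω → ℝ} (hf : ∀ t, Measurable (f t))
    (y : ℝ) (N : ℕ) : MeasurableSet (AN f y N) := by
  have : AN f y N = ⋃ k, ⋃ (_ : k ≤ 2 ^ N), {ω | f (dy N k) ω ≤ y} := by
    ext ω; simp [AN]
  rw [this]
  exact MeasurableSet.iUnion fun k => MeasurableSet.iUnion fun _ =>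
    measurableSet_le (hf _) measurable_const

lemma measurableSet_ASet {f : unitInterval → Ω → ℝ} (hf : ∀ t, Measurable (f t))
    (y : ℝ) : MeasurableSet (ASet f y) :=
  MeasurableSet.iUnion fun N => measurableSet_AN hf y N

lemma mem_ASet_of_lt {f : unitInterval → Ω → ℝ} {ω : Ω}
    (hc : Continuous fun t => f t ω) {z : ℝ} (t : unitInterval) (h : f t ω < z) :
    ω ∈ ASet f z := by
  obtain ⟨δ, hδ, hδ'⟩ := Metric.continuous_iff.1 hc t (z - f t ω) (by linarith)
  obtain ⟨N, hN⟩ : ∃ N : ℕ, (1 / 2 : ℝ) ^ N < δ :=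
    exists_pow_lt_of_lt_one hδ (by norm_num)
  have h2N : (0:ℝ) < 2 ^ N := by positivity
  set k : ℕ := ⌊(t : ℝ) * 2 ^ N⌋₊ with hk
  have ht0 : (0:ℝ) ≤ (t:ℝ) := t.2.1
  have ht1 : (t:ℝ) ≤ 1 := t.2.2
  have hkle : (k : ℝ) ≤ (t : ℝ) * 2 ^ N := Nat.floor_le (by positivity)
  have hklt : (t : ℝ) * 2 ^ N < k + 1 := Nat.lt_floor_add_one _
  have hk2N : k ≤ 2 ^ N := by
    have : ((k : ℕ) : ℝ) ≤ ((2 ^ N : ℕ) : ℝ) := by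
      push_cast; nlinarith
    exact_mod_cast this
  have hcoe : (dy N k : ℝ) = (k : ℝ) / 2 ^ N := dy_coe_of_le hk2N
  have hdist : dist (dy N k) t < δ := by
    rw [Subtype.dist_eq, Real.dist_eq, hcoe]
    rw [abs_of_nonpos (by rw [sub_nonpos, div_le_iff₀ h2N]; linarith)]
    have : (t : ℝ) - (k : ℝ) / 2 ^ N < 1 / 2 ^ N := by
      rw [lt_div_iff₀ h2N, sub_mul]
      have hcan : (k:ℝ)/2^N*2^N = k := div_mul_cancel₀ _ (ne_of_gt h2N)
      linarith
    calc -((k:ℝ) / 2 ^ N - t) = (t:ℝ) - (k:ℝ) / 2 ^ N := by ring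
      _ < 1 / 2 ^ N := this
      _ = (1 / 2 : ℝ) ^ N := by rw [div_pow]; norm_num
      _ < δ := hN
  have := hδ' _ hdist
  rw [Real.dist_eq] at this
  have hfk : f (dy N k) ω < z := by
    cases abs_sub_lt_iff.1 this with
    | intro h1 h2 => linarith
  exact Set.mem_iUnion.2 ⟨N, ⟨k, hk2N, hfk.le⟩⟩

lemma ASet_eq_univ {f : unitInterval → Ω → ℝ} {c z : ℝ} (h0 : ∀ ω, f 0 ω = c)
    (hz : c ≤ z) : ASet f z = Set.univ := by
  ext ω
  simp only [Set.mem_univ, iff_true]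
  exact Set.mem_iUnion.2 ⟨0, ⟨0, by norm_num, by rw [dy_zero, h0]; exact hz⟩⟩

variable {μ : Measure Ω}

section Core

variable {ℱ : Filtration unitInterval m0} {f : unitInterval → Ω → ℝ}

/-- discrete filtration along the dyadic grid -/
noncomputable def grid (ℱ : Filtration unitInterval m0) (N : ℕ) : Filtration ℕ m0 where
  seq := fun k => ℱ (dy N k)
  mono' := fun k l hkl => ℱ.mono (dy_mono N hkl)
  le' := fun k => ℱ.le _

noncomputable def gp (f : unitInterval → Ω → ℝ) (N : ℕ) : ℕ → Ω → ℝ := fun k => f (dy N k)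

lemma gp_mart (hm : Martingale f ℱ μ) (N : ℕ) : Martingale (gp f N) (grid ℱ N) μ :=
  ⟨fun k => hm.stronglyAdapted _, fun k l hkl => hm.condExp_ae_eq (dy_mono N hkl)⟩

noncomputable def tauN (f : unitInterval → Ω → ℝ) (y : ℝ) (N : ℕ) : Ω → ℕ :=
  hittingBtwn (gp f N) (Set.Iic y) 0 (2 ^ N)

noncomputable def svN (f : unitInterval → Ω → ℝ) (y : ℝ) (N : ℕ) : Ω → ℝ :=
  stoppedValue (gp f N) (fun ω => (tauN f y N ω : WithTop ℕ))

lemma tau_st (hm : Martingale f ℱ μ) (y : ℝ) (N : ℕ) :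
    IsStoppingTime (grid ℱ N) (fun ω => (tauN f y N ω : WithTop ℕ)) :=
  Adapted.isStoppingTime_hittingBtwn (gp_mart hm N).stronglyAdapted.adapted measurableSet_Iic

lemma tau_le (f : unitInterval → Ω → ℝ) (y : ℝ) (N : ℕ) (ω : Ω) :
    tauN f y N ω ≤ 2 ^ N := hittingBtwn_le ω

lemma tau_le' (f : unitInterval → Ω → ℝ) (y : ℝ) (N : ℕ) (ω : Ω) :
    (tauN f y N ω : WithTop ℕ) ≤ ((2 ^ N : ℕ) : WithTop ℕ) :=
  WithTop.coe_le_coe.2 (tau_le f y N ω)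

lemma sv_mem_Icc (hb : ∀ t ω, f t ω ∈ Set.Icc (0 : ℝ) 1) (y : ℝ) (N : ℕ) (ω : Ω) :
    svN f y N ω ∈ Set.Icc (0 : ℝ) 1 := hb _ ω

lemma mem_AN_iff_sv_le {y : ℝ} {N : ℕ} {ω : Ω} :
    ω ∈ AN f y N ↔ svN f y N ω ≤ y := by
  constructor
  · rintro ⟨k, hk, h⟩
    exact stoppedValue_hittingBtwn_mem (u := gp f N) (s := Set.Iic y)
      ⟨k, ⟨Nat.zero_le _, hk⟩, Set.mem_Iic.2 h⟩
  · intro h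
    exact ⟨tauN f y N ω, tau_le f y N ω, h⟩

lemma sv_eq_of_not_mem {y : ℝ} {N : ℕ} {ω : Ω} (h : ω ∉ AN f y N) :
    svN f y N ω = f 1 ω := by
  have hne : ¬∃ j ∈ Set.Icc 0 (2 ^ N), gp f N j ω ∈ Set.Iic y := by
    rintro ⟨j, hj, hj'⟩
    exact h ⟨j, hj.2, hj'⟩
  have htau : tauN f y N ω = 2 ^ N := by
    simp only [tauN, hittingBtwn, if_neg hne]
  show gp f N (tauN f y N ω) ω = f 1 ω
  rw [htau, gp, dy_last]

lemma sv_measurable (hm : Martingale f ℱ μ) (y : ℝ) (N : ℕ) : Measurable (svN f y N) :=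
  (measurable_stoppedValue ((gp_mart hm N).stronglyAdapted.progMeasurable_of_discrete)
    (tau_st hm y N)).mono ((tau_st hm y N).measurableSpace_le_of_le (tau_le' f y N)) le_rfl

variable [IsProbabilityMeasure μ]

lemma sv_integral (hm : Martingale f ℱ μ) {c : ℝ} (h0 : ∀ ω, f 0 ω = c) (y : ℝ) (N : ℕ) :
    ∫ ω, svN f y N ω ∂μ = c := by
  have hτ := tau_st hm y N
  have hτle := tau_le' f y N
  have hcx := (gp_mart hm N).stoppedValue_ae_eq_condExp_of_le_const hτ hτle
  have h1 : ∫ ω, svN f y N ω ∂μ = ∫ ω, (μ[gp f N (2 ^ N)|hτ.measurableSpace]) ω ∂μ :=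
    integral_congr_ae hcx
  have h2 : ∫ ω, (μ[gp f N (2 ^ N)|hτ.measurableSpace]) ω ∂μ = ∫ ω, gp f N (2 ^ N) ω ∂μ :=
    integral_condExp (hτ.measurableSpace_le_of_le hτle)
  have h3 : ∫ ω, gp f N (2 ^ N) ω ∂μ = ∫ ω, gp f N 0 ω ∂μ := by
    rw [← integral_condExp ((grid ℱ N).le 0)]
    exact integral_congr_ae ((gp_mart hm N).condExp_ae_eq (Nat.zero_le _))
  have h4 : ∫ ω, gp f N 0 ω ∂μ = c := by
    have : gp f N 0 = fun _ => c := by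
      funext ω; rw [gp, dy_zero, h0]
    rw [this, integral_const, probReal_univ, one_smul]
  rw [h1, h2, h3, h4]

lemma setIntegral_AN (hm : Martingale f ℱ μ) (y : ℝ) (N : ℕ) :
    ∫ ω in AN f y N, f 1 ω ∂μ = ∫ ω in AN f y N, svN f y N ω ∂μ := by
  have hτ := tau_st hm y N
  have hτle := tau_le' f y N
  have hcx := (gp_mart hm N).stoppedValue_ae_eq_condExp_of_le_const hτ hτle
  have hmsv : Measurable[hτ.measurableSpace] (svN f y N) :=
    measurable_stoppedValue ((gp_mart hm N).stronglyAdapted.progMeasurable_of_discrete) hτ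
  have hsAN : MeasurableSet[hτ.measurableSpace] (AN f y N) := by
    have : AN f y N = svN f y N ⁻¹' Set.Iic y := by
      ext ω; exact mem_AN_iff_sv_le
    rw [this]
    exact hmsv measurableSet_Iic
  have hgp1 : gp f N (2 ^ N) = f 1 := by
    funext ω; rw [gp, dy_last]
  calc ∫ ω in AN f y N, f 1 ω ∂μ
      = ∫ ω in AN f y N, gp f N (2 ^ N) ω ∂μ := by rw [hgp1]
    _ = ∫ ω in AN f y N, (μ[gp f N (2 ^ N)|hτ.measurableSpace]) ω ∂μ :=
        (setIntegral_condExp (hτ.measurableSpace_le_of_le hτle) (hm.integrable _) hsAN).symm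
    _ = ∫ ω in AN f y N, svN f y N ω ∂μ :=
        integral_congr_ae (ae_restrict_of_ae hcx.symm)

open scoped Classical in
lemma sv_tendsto (hcont : ∀ ω, Continuous fun t => f t ω) {c y : ℝ}
    (h0 : ∀ ω, f 0 ω = c) (hyc : y < c) (ω : Ω) :
    Tendsto (fun N => svN f y N ω) atTop (𝓝 (if ω ∈ ASet f y then y else f 1 ω)) := by
  by_cases hA : ω ∈ ASet f y
  · rw [if_pos hA]
    obtain ⟨N₀, hN₀⟩ := Set.mem_iUnion.1 hA
    rw [Metric.tendsto_atTop]
    intro ε hε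
    obtain ⟨δ, hδ, hδ'⟩ := Metric.uniformContinuous_iff.1
      (CompactSpace.uniformContinuous_of_continuous (hcont ω)) ε hε
    obtain ⟨M, hM⟩ : ∃ M : ℕ, (1 / 2 : ℝ) ^ M < δ :=
      exists_pow_lt_of_lt_one hδ (by norm_num)
    refine ⟨max M N₀, fun N hN => ?_⟩
    have hNM : M ≤ N := le_trans (le_max_left _ _) hN
    have hNN₀ : N₀ ≤ N := le_trans (le_max_right _ _) hN
    have hmem : ω ∈ AN f y N := AN_mono f y hNN₀ hN₀
    set k := tauN f y N ω with hkdef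
    have hsv_le : svN f y N ω ≤ y := mem_AN_iff_sv_le.1 hmem
    have hk_le : k ≤ 2 ^ N := tau_le f y N ω
    have hk1 : 1 ≤ k := by
      by_contra hcon
      have hk0 : k = 0 := by omega
      have : svN f y N ω = c := by
        show gp f N (tauN f y N ω) ω = c
        rw [← hkdef, hk0, gp, dy_zero, h0]
      linarith [hsv_le, this]
    have hprev : y < gp f N (k - 1) ω := by
      have := notMem_of_lt_hittingBtwn (u := gp f N) (s := Set.Iic y) (n := 0) (m := 2 ^ N)
        (k := k - 1) (ω := ω) (show k - 1 < tauN f y N ω by rw [← hkdef]; omega) (Nat.zero_le _)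
      simpa [Set.mem_Iic, not_le] using this
    have hdd : dist (dy N (k - 1)) (dy N k) < δ := by
      rw [dy_dist hk1 hk_le]
      calc (1 : ℝ) / 2 ^ N = (1 / 2 : ℝ) ^ N := by rw [div_pow]; norm_num
        _ ≤ (1 / 2 : ℝ) ^ M := pow_le_pow_of_le_one (by norm_num) (by norm_num) hNM
        _ < δ := hM
    have hcl : dist (f (dy N (k - 1)) ω) (f (dy N k) ω) < ε := hδ' hdd
    rw [Real.dist_eq] at hcl ⊢
    have habs := abs_sub_lt_iff.1 hcl
    have hsvk : svN f y N ω = f (dy N k) ω := rfl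
    rw [abs_sub_lt_iff]
    constructor
    · linarith
    · have : gp f N (k - 1) ω = f (dy N (k - 1)) ω := rfl
      linarith [habs.1, habs.2]
  · rw [if_neg hA]
    have heq : ∀ N, svN f y N ω = f 1 ω := fun N =>
      sv_eq_of_not_mem fun h => hA (Set.mem_iUnion.2 ⟨N, h⟩)
    exact tendsto_const_nhds.congr fun N => (heq N).symm


open scoped Classical in
theorem core (hm : Martingale f ℱ μ) (hcont : ∀ ω, Continuous fun t => f t ω)
    (hb : ∀ t ω, f t ω ∈ Set.Icc (0 : ℝ) 1) {c y : ℝ}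
    (h0 : ∀ ω, f 0 ω = c) (hy0 : 0 ≤ y) (hyc : y < c) (hc1 : c < 1)
    (hterm : ∀ᵐ ω ∂μ, f 1 ω = 0 ∨ f 1 ω = 1) :
    (μ (ASet f y)).toReal = (1 - c) / (1 - y) ∧
    (μ (ASet f y ∩ {ω | f 1 ω = 1})).toReal = y * ((1 - c) / (1 - y)) := by
  have hms : ∀ t, Measurable (f t) := fun t => ((hm.stronglyAdapted t).mono (ℱ.le t)).measurable
  have hANm : ∀ N, MeasurableSet (AN f y N) := measurableSet_AN hms y
  have hAm : MeasurableSet (ASet f y) := measurableSet_ASet hms y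
  have hf1m : Measurable (f 1) := hms 1
  have h1y : (0:ℝ) < 1 - y := by linarith
  set A := ASet f y with hAdef
  set a := (μ A).toReal with hadef
  -- measurability and bounds for the stopped values
  have hsvm : ∀ N, Measurable (svN f y N) := sv_measurable hm y
  have hsv_bd : ∀ N ω, ‖svN f y N ω‖ ≤ (1:ℝ) := fun N ω => by
    have h := sv_mem_Icc hb y N ω
    rw [Real.norm_eq_abs, abs_le]
    exact ⟨by linarith [h.1], h.2⟩
  have hf1_bd : ∀ ω, ‖f 1 ω‖ ≤ (1:ℝ) := fun ω => by
    have h := hb 1 ω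
    rw [Real.norm_eq_abs, abs_le]
    exact ⟨by linarith [h.1], h.2⟩
  -- the pointwise limit function
  set hlim : Ω → ℝ := fun ω => if ω ∈ A then y else f 1 ω with hlimdef
  have hlim_meas : Measurable hlim := Measurable.ite hAm measurable_const hf1m
  have hlim_bd : ∀ ω, ‖hlim ω‖ ≤ (1:ℝ) := fun ω => by
    by_cases h : ω ∈ A
    · simp only [hlimdef, if_pos h, Real.norm_eq_abs, abs_le]
      constructor <;> linarith
    · simp only [hlimdef, if_neg h]
      exact hf1_bd ω
  have hlim_int : Integrable hlim μ :=
    (integrable_const (1:ℝ)).mono' hlim_meas.aestronglyMeasurable (ae_of_all _ hlim_bd)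
  -- first identity: ∫ hlim = c
  have hconv : Tendsto (fun N => ∫ ω, svN f y N ω ∂μ) atTop (𝓝 (∫ ω, hlim ω ∂μ)) :=
    tendsto_integral_of_dominated_convergence 1
      (fun N => (hsvm N).aestronglyMeasurable) (integrable_const 1)
      (fun N => ae_of_all _ (hsv_bd N)) (ae_of_all _ (sv_tendsto hcont h0 hyc))
  have hlimc : ∫ ω, hlim ω ∂μ = c := by
    have h2 : Tendsto (fun _ : ℕ => c) atTop (𝓝 (∫ ω, hlim ω ∂μ)) :=
      hconv.congr fun N => sv_integral hm h0 y N
    exact tendsto_nhds_unique h2 tendsto_const_nhds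
  have hsplit : ∫ ω, hlim ω ∂μ = (∫ ω in A, hlim ω ∂μ) + ∫ ω in Aᶜ, hlim ω ∂μ :=
    (integral_add_compl hAm hlim_int).symm
  have hIA : ∫ ω in A, hlim ω ∂μ = y * a := by
    rw [setIntegral_congr_fun hAm (fun ω hω => if_pos hω), setIntegral_const, smul_eq_mul,
      mul_comm]
    rfl
  have hone : ∀ᵐ ω ∂μ, ω ∈ Aᶜ → f 1 ω = 1 := by
    refine hterm.mono fun ω h hω => ?_
    rcases h with h | h
    · exfalso
      apply hω
      refine Set.mem_iUnion.2 ⟨0, 1, by norm_num, ?_⟩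
      have hdy : dy 0 1 = 1 := by simpa using dy_last 0
      rw [hdy, h]; exact hy0
    · exact h
  have hIAc : ∫ ω in Aᶜ, hlim ω ∂μ = (μ Aᶜ).toReal := by
    have e1 : ∫ ω in Aᶜ, hlim ω ∂μ = ∫ ω in Aᶜ, f 1 ω ∂μ :=
      setIntegral_congr_fun hAm.compl fun ω hω => if_neg hω
    have e2 : ∫ ω in Aᶜ, f 1 ω ∂μ = ∫ ω in Aᶜ, (1:ℝ) ∂μ :=
      setIntegral_congr_ae hAm.compl (hone.mono fun ω h hω => h hω)
    rw [e1, e2, setIntegral_const, smul_eq_mul, mul_one]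
    rfl
  have hAc : (μ Aᶜ).toReal = 1 - a := by
    rw [measure_compl hAm (measure_ne_top μ A), measure_univ,
      ENNReal.toReal_sub_of_le prob_le_one ENNReal.one_ne_top, ENNReal.toReal_one]
  have heq1 : c = y * a + (1 - a) := by
    rw [← hlimc, hsplit, hIA, hIAc, hAc]
  have hconc1 : a = (1 - c) / (1 - y) := by
    rw [eq_div_iff (ne_of_gt h1y)]
    linarith
  -- second identity
  have hJ1 : Tendsto (fun N => ∫ ω in AN f y N, f 1 ω ∂μ) atTop (𝓝 (∫ ω in A, f 1 ω ∂μ)) := by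
    have hrw : ∀ N, ∫ ω in AN f y N, f 1 ω ∂μ = ∫ ω, (AN f y N).indicator (f 1) ω ∂μ :=
      fun N => (integral_indicator (hANm N)).symm
    have hrwA : ∫ ω in A, f 1 ω ∂μ = ∫ ω, A.indicator (f 1) ω ∂μ :=
      (integral_indicator hAm).symm
    simp only [hrw, hrwA]
    refine tendsto_integral_of_dominated_convergence 1
      (fun N => (hf1m.indicator (hANm N)).aestronglyMeasurable) (integrable_const 1)
      (fun N => ae_of_all _ fun ω => ?_) (ae_of_all _ fun ω => ?_)
    · by_cases h : ω ∈ AN f y N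
      · rw [Set.indicator_of_mem h]; exact hf1_bd ω
      · rw [Set.indicator_of_notMem h]; simp
    · by_cases hA' : ω ∈ A
      · obtain ⟨N₀, hN₀⟩ := Set.mem_iUnion.1 hA'
        have hev : (fun _ : ℕ => A.indicator (f 1) ω) =ᶠ[atTop]
            (fun N => (AN f y N).indicator (f 1) ω) := by
          rw [EventuallyEq, eventually_atTop]
          refine ⟨N₀, fun N hN => ?_⟩
          rw [Set.indicator_of_mem (AN_mono f y hN hN₀), Set.indicator_of_mem hA']
        exact Tendsto.congr' hev tendsto_const_nhds
      · have : ∀ N, (AN f y N).indicator (f 1) ω = 0 := fun N =>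
          Set.indicator_of_notMem (fun h => hA' (Set.mem_iUnion.2 ⟨N, h⟩)) _
        rw [Set.indicator_of_notMem hA']
        exact tendsto_const_nhds.congr fun N => (this N).symm
  have hJ3 : Tendsto (fun N => ∫ ω in AN f y N, svN f y N ω ∂μ) atTop (𝓝 (y * a)) := by
    have hrw : ∀ N, ∫ ω in AN f y N, svN f y N ω ∂μ
        = ∫ ω, (AN f y N).indicator (svN f y N) ω ∂μ :=
      fun N => (integral_indicator (hANm N)).symm
    have hrwA : y * a = ∫ ω, A.indicator (fun _ => y) ω ∂μ := by
      rw [integral_indicator_const _ hAm, smul_eq_mul, mul_comm]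
      rfl
    simp only [hrw]
    rw [hrwA]
    refine tendsto_integral_of_dominated_convergence 1
      (fun N => ((hsvm N).indicator (hANm N)).aestronglyMeasurable) (integrable_const 1)
      (fun N => ae_of_all _ fun ω => ?_) (ae_of_all _ fun ω => ?_)
    · by_cases h : ω ∈ AN f y N
      · rw [Set.indicator_of_mem h]; exact hsv_bd N ω
      · rw [Set.indicator_of_notMem h]; simp
    · by_cases hA' : ω ∈ A
      · obtain ⟨N₀, hN₀⟩ := Set.mem_iUnion.1 hA'
        have htd : Tendsto (fun N => svN f y N ω) atTop (𝓝 (A.indicator (fun _ => y) ω)) := by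
          rw [Set.indicator_of_mem hA']
          have := sv_tendsto hcont h0 hyc ω
          rwa [if_pos hA'] at this
        refine htd.congr' ?_
        rw [EventuallyEq, eventually_atTop]
        exact ⟨N₀, fun N hN => (Set.indicator_of_mem (AN_mono f y hN hN₀) _).symm⟩
      · have hz : ∀ N, (AN f y N).indicator (svN f y N) ω = 0 := fun N =>
          Set.indicator_of_notMem (fun h => hA' (Set.mem_iUnion.2 ⟨N, h⟩)) _
        rw [Set.indicator_of_notMem hA']
        exact tendsto_const_nhds.congr fun N => (hz N).symm
  have hJeq : ∫ ω in A, f 1 ω ∂μ = y * a := by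
    have hsame : ∀ N, ∫ ω in AN f y N, f 1 ω ∂μ = ∫ ω in AN f y N, svN f y N ω ∂μ :=
      setIntegral_AN hm y
    exact tendsto_nhds_unique (hJ1.congr hsame) hJ3
  have hset1 : MeasurableSet {ω | f 1 ω = 1} := by
    have : {ω | f 1 ω = 1} = f 1 ⁻¹' {1} := rfl
    rw [this]; exact hf1m (measurableSet_singleton 1)
  have hrepr : ∫ ω in A, f 1 ω ∂μ = (μ (A ∩ {ω | f 1 ω = 1})).toReal := by
    have hind : ∀ᵐ ω ∂μ, ω ∈ A → f 1 ω = ({ω | f 1 ω = 1}).indicator (fun _ => (1:ℝ)) ω := by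
      refine hterm.mono fun ω h _ => ?_
      rcases h with h | h
      · rw [Set.indicator_of_notMem (by simp [h]), h]
      · rw [Set.indicator_of_mem (by simpa using h), h]
    rw [setIntegral_congr_ae hAm hind, setIntegral_indicator hset1, setIntegral_const,
      smul_eq_mul, mul_one]
    rfl
  refine ⟨hconc1, ?_⟩
  rw [← hrepr, hJeq, hconc1]

end Core


end Stmt12Aux

open MeasureTheory ProbabilityTheory unitInterval Filter Topology Stmt12Aux in
theorem stmt_12 {Ω : Type*} {m0 : MeasurableSpace Ω} {μ : Measure Ω}
    [IsProbabilityMeasure μ]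
    {ℱ : Filtration unitInterval m0} {n : ℕ} (hn : 2 ≤ n)
    {p : Fin n → unitInterval → Ω → ℝ} {Y : Fin n → Ω → ℝ} {p₀ : Fin n → ℝ}
    (hmart : ∀ i, Martingale (p i) ℱ μ)
    (hcont : ∀ i ω, Continuous fun t => p i t ω)
    (hbdd : ∀ i t ω, p i t ω ∈ Set.Icc (0:ℝ) 1)
    (hsum : ∀ t ω, ∑ i, p i t ω = 1)
    (hp0 : ∀ i ω, p i 0 ω = p₀ i)
    (hp0mem : ∀ i, p₀ i ∈ Set.Ioo (0:ℝ) 1)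
    (hY : ∀ᵐ ω ∂μ, ∀ i, Y i ω = 0 ∨ Y i ω = 1)
    (hwinner : ∀ᵐ ω ∂μ, ∃! i, Y i ω = 1)
    (hterm : ∀ᵐ ω ∂μ, ∀ i, p i 1 ω = Y i ω)
    (hprior : ∀ i, (μ {ω | Y i ω = 1}).toReal = p₀ i) :
    (∀ x : ℝ, 0 ≤ x → (∃ i, x < p₀ i) →
      (μ {ω | (⨅ t, ∑ i, if Y i ω = 1 then p i t ω else 0) ≤ x}).toReal
        = (∑ i, if p₀ i ≤ x then p₀ i else 0)
          + (x / (1 - x)) * ∑ i, if x < p₀ i then 1 - p₀ i else 0) ∧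
    (∀ x : ℝ, (∀ i, p₀ i ≤ x) →
      (μ {ω | (⨅ t, ∑ i, if Y i ω = 1 then p i t ω else 0) ≤ x}).toReal = 1) := by
  classical
  -- a measurable "good" event of full measure
  have hP : ∀ᵐ ω ∂μ, (∀ i, Y i ω = 0 ∨ Y i ω = 1) ∧ (∃! i, Y i ω = 1) ∧
      (∀ i, p i 1 ω = Y i ω) := hY.and (hwinner.and hterm)
  set E : Set Ω := (toMeasurable μ {ω | ¬ ((∀ i, Y i ω = 0 ∨ Y i ω = 1) ∧ (∃! i, Y i ω = 1) ∧
      (∀ i, p i 1 ω = Y i ω))})ᶜ with hEdef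
  have hEm : MeasurableSet E := (measurableSet_toMeasurable μ _).compl
  have hEc : μ Eᶜ = 0 := by
    rw [hEdef, compl_compl, measure_toMeasurable]
    exact ae_iff.1 hP
  have hEP : ∀ ω ∈ E, (∀ i, Y i ω = 0 ∨ Y i ω = 1) ∧ (∃! i, Y i ω = 1) ∧
      (∀ i, p i 1 ω = Y i ω) := fun ω hω => by
    by_contra hcon
    exact hω (subset_toMeasurable μ _ hcon)
  have hEae : ∀ᵐ ω ∂μ, ω ∈ E := by
    have : {ω | ¬ ω ∈ E} = Eᶜ := rfl
    rw [ae_iff, this]; exact hEc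
  have hμE : μ E = 1 := by
    have h := measure_add_measure_compl (μ := μ) hEm
    rw [hEc, add_zero, measure_univ] at h
    exact h
  have hms : ∀ i t, Measurable (p i t) := fun i t =>
    (((hmart i).stronglyAdapted t).mono (ℱ.le t)).measurable
  set T : Fin n → Set Ω := fun i => {ω | p i 1 ω = 1} ∩ E with hTdef
  have hTm : ∀ i, MeasurableSet (T i) := fun i =>
    ((hms i 1) (measurableSet_singleton 1)).inter hEm
  have hwin : ∀ ω ∈ E, ∀ i, p i 1 ω = 1 → Y i ω = 1 := fun ω hω i hVi => by
    rw [← (hEP ω hω).2.2 i]; exact hVi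
  have hTwin : ∀ ω ∈ E, ∀ i, Y i ω = 1 → ω ∈ T i := fun ω hω i hYi =>
    ⟨by rw [Set.mem_setOf_eq, (hEP ω hω).2.2 i]; exact hYi, hω⟩
  have hdisj : Pairwise (Function.onFun Disjoint T) := by
    intro i j hij
    rw [Function.onFun, Set.disjoint_left]
    rintro ω ⟨hVi, hE⟩ ⟨hVj, _⟩
    obtain ⟨w, _, huniq⟩ := (hEP ω hE).2.1
    exact hij ((huniq i (hwin ω hE i hVi)).trans (huniq j (hwin ω hE j hVj)).symm)
  have hμT : ∀ i, (μ (T i)).toReal = p₀ i := fun i => by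
    rw [← hprior i]
    congr 1
    apply measure_congr
    rw [Filter.eventuallyEq_set]
    filter_upwards [hEae] with ω hω
    constructor
    · rintro ⟨hVi, _⟩; exact hwin ω hω i hVi
    · intro hYi; exact hTwin ω hω i hYi
  have hsumT : ∀ i, ∀ ω ∈ T i, ∀ t, (∑ j, if Y j ω = 1 then p j t ω else 0) = p i t ω := by
    intro i ω hω t
    obtain ⟨hVi, hE⟩ := hω
    have hYi : Y i ω = 1 := hwin ω hE i hVi
    obtain ⟨w, _, huniq⟩ := (hEP ω hE).2.1
    rw [Finset.sum_eq_single i]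
    · rw [if_pos hYi]
    · intro j _ hji
      exact if_neg fun h => hji ((huniq j h).trans (huniq i hYi).symm)
    · intro h; exact absurd (Finset.mem_univ i) h
  have hBddp : ∀ i ω, BddBelow (Set.range fun t => p i t ω) := fun i ω =>
    ⟨0, by rintro z ⟨t, rfl⟩; exact (hbdd i t ω).1⟩
  have hMT : ∀ i, ∀ ω ∈ T i,
      (⨅ t, ∑ j, if Y j ω = 1 then p j t ω else 0) = ⨅ t, p i t ω := fun i ω hω =>
    iInf_congr (fun t => hsumT i ω hω t)
  have haeterm : ∀ i, ∀ᵐ ω ∂μ, p i 1 ω = 0 ∨ p i 1 ω = 1 := fun i => by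
    filter_upwards [hP] with ω hω
    rw [hω.2.2 i]; exact hω.1 i
  have hcomp : ∀ i, ∀ z : ℝ, 0 ≤ z → z < p₀ i →
      (μ (ASet (p i) z ∩ T i)).toReal = z * ((1 - p₀ i) / (1 - z)) := by
    intro i z hz0 hzp
    have hcore := core (hmart i) (hcont i) (hbdd i) (fun ω => hp0 i ω) hz0 hzp
      (hp0mem i).2 (haeterm i)
    rw [← hcore.2]
    congr 1
    apply measure_congr
    rw [Filter.eventuallyEq_set]
    filter_upwards [hEae] with ω hω
    rw [hTdef]
    simp only [Set.mem_inter_iff, Set.mem_setOf_eq]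
    tauto
  have hcompU : ∀ i, ∀ z : ℝ, p₀ i ≤ z → ASet (p i) z ∩ T i = T i := fun i z hz => by
    rw [ASet_eq_univ (fun ω => hp0 i ω) hz, Set.univ_inter]
  constructor
  · -- main distribution formula
    intro x hx0 hxlt
    obtain ⟨i₀, hi₀⟩ := hxlt
    have hx1 : x < 1 := lt_trans hi₀ (hp0mem i₀).2
    have hUdisj : ∀ z : ℝ, Pairwise (Function.onFun Disjoint fun i => ASet (p i) z ∩ T i) :=
      fun z i j hij => ((hdisj hij).mono Set.inter_subset_right) Set.inter_subset_right
    have hUm : ∀ (z : ℝ) i, MeasurableSet (ASet (p i) z ∩ T i) := fun z i =>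
      (measurableSet_ASet (hms i) z).inter (hTm i)
    have hUmeas : ∀ z : ℝ, x ≤ z → (∀ i, x < p₀ i → z < p₀ i) →
        (μ (⋃ i, ASet (p i) z ∩ T i)).toReal
          = ∑ i, (if p₀ i ≤ x then p₀ i else z * ((1 - p₀ i) / (1 - z))) := by
      intro z hxz hzlt
      rw [measure_iUnion (hUdisj z) (hUm z), tsum_fintype,
        ENNReal.toReal_sum (fun i _ => measure_ne_top μ _)]
      refine Finset.sum_congr rfl fun i _ => ?_
      by_cases hpi : p₀ i ≤ x
      · rw [if_pos hpi, hcompU i z (le_trans hpi hxz), hμT i]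
      · rw [if_neg hpi]
        exact hcomp i z (le_trans hx0 hxz) (hzlt i (not_le.1 hpi))
    have hGsub : ∀ z : ℝ, x < z →
        {ω | (⨅ t, ∑ i, if Y i ω = 1 then p i t ω else 0) ≤ x}
          ⊆ (⋃ i, ASet (p i) z ∩ T i) ∪ Eᶜ := by
      intro z hxz ω hω
      by_cases hE' : ω ∈ E
      · left
        obtain ⟨w, hw, _⟩ := (hEP ω hE').2.1
        have hTw : ω ∈ T w := hTwin ω hE' w hw
        have hlt : (⨅ t, p w t ω) < z :=
          lt_of_le_of_lt (le_trans (le_of_eq (hMT w ω hTw).symm) hω) hxz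
        obtain ⟨t, ht⟩ := exists_lt_of_ciInf_lt hlt
        exact Set.mem_iUnion.2 ⟨w, mem_ASet_of_lt (hcont w ω) t ht, hTw⟩
      · right; exact hE'
    have hLsub : (⋃ i, ASet (p i) x ∩ T i)
        ⊆ {ω | (⨅ t, ∑ i, if Y i ω = 1 then p i t ω else 0) ≤ x} := by
      intro ω hω
      obtain ⟨i, hA, hT⟩ := Set.mem_iUnion.1 hω
      have hm1 : (⨅ t, ∑ j, if Y j ω = 1 then p j t ω else 0) = ⨅ t, p i t ω := hMT i ω hT
      rw [Set.mem_setOf_eq, hm1]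
      obtain ⟨N, k, hk, hfk⟩ : ∃ N, ∃ k ≤ 2 ^ N, p i (dy N k) ω ≤ x := by
        obtain ⟨N, hN⟩ := Set.mem_iUnion.1 hA
        exact ⟨N, hN⟩
      exact le_trans (ciInf_le (hBddp i ω) (dy N k)) hfk
    have hub : ∀ z : ℝ, x < z → (∀ i, x < p₀ i → z < p₀ i) →
        (μ {ω | (⨅ t, ∑ i, if Y i ω = 1 then p i t ω else 0) ≤ x}).toReal
          ≤ ∑ i, (if p₀ i ≤ x then p₀ i else z * ((1 - p₀ i) / (1 - z))) := by
      intro z h1 h2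
      have hle : μ {ω | (⨅ t, ∑ i, if Y i ω = 1 then p i t ω else 0) ≤ x}
          ≤ μ (⋃ i, ASet (p i) z ∩ T i) := by
        calc μ _ ≤ μ ((⋃ i, ASet (p i) z ∩ T i) ∪ Eᶜ) := measure_mono (hGsub z h1)
          _ ≤ μ (⋃ i, ASet (p i) z ∩ T i) + μ Eᶜ := measure_union_le _ _
          _ = μ (⋃ i, ASet (p i) z ∩ T i) := by rw [hEc, add_zero]
      rw [← hUmeas z h1.le h2]
      exact ENNReal.toReal_mono (measure_ne_top _ _) hle
    have hlb : ∑ i, (if p₀ i ≤ x then p₀ i else x * ((1 - p₀ i) / (1 - x)))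
        ≤ (μ {ω | (⨅ t, ∑ i, if Y i ω = 1 then p i t ω else 0) ≤ x}).toReal := by
      rw [← hUmeas x le_rfl (fun i h => h)]
      exact ENNReal.toReal_mono (measure_ne_top _ _) (measure_mono hLsub)
    -- squeeze z ↓ x
    have hne : (Finset.univ.filter fun i => x < p₀ i).Nonempty :=
      ⟨i₀, Finset.mem_filter.2 ⟨Finset.mem_univ _, hi₀⟩⟩
    set m' := (Finset.univ.filter fun i => x < p₀ i).inf' hne p₀ with hm'def
    have hxm : x < m' := (Finset.lt_inf'_iff hne).2 fun i hi => (Finset.mem_filter.1 hi).2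
    have hcontz : Tendsto
        (fun z : ℝ => ∑ i, (if p₀ i ≤ x then p₀ i else z * ((1 - p₀ i) / (1 - z))))
        (𝓝[>] x)
        (𝓝 (∑ i, (if p₀ i ≤ x then p₀ i else x * ((1 - p₀ i) / (1 - x))))) := by
      refine Tendsto.mono_left ?_ nhdsWithin_le_nhds
      apply tendsto_finset_sum
      intro i _
      by_cases hpi : p₀ i ≤ x
      · simp only [if_pos hpi]; exact tendsto_const_nhds
      · simp only [if_neg hpi]
        have hca : ContinuousAt (fun z : ℝ => z * ((1 - p₀ i) / (1 - z))) x :=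
          continuousAt_id.mul (continuousAt_const.div
            (continuousAt_const.sub continuousAt_id) (sub_ne_zero.2 (by linarith : (1:ℝ) ≠ x)))
        exact hca.tendsto
    have hfinal_le :
        (μ {ω | (⨅ t, ∑ i, if Y i ω = 1 then p i t ω else 0) ≤ x}).toReal
          ≤ ∑ i, (if p₀ i ≤ x then p₀ i else x * ((1 - p₀ i) / (1 - x))) := by
      refine ge_of_tendsto hcontz ?_
      refine Filter.mem_of_superset (Ioo_mem_nhdsGT_of_mem ⟨le_rfl, hxm⟩) ?_
      intro z hz
      exact hub z hz.1 fun i hi =>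
        lt_of_lt_of_le hz.2 (Finset.inf'_le p₀ (Finset.mem_filter.2 ⟨Finset.mem_univ _, hi⟩))
    have hG : (μ {ω | (⨅ t, ∑ i, if Y i ω = 1 then p i t ω else 0) ≤ x}).toReal
        = ∑ i, (if p₀ i ≤ x then p₀ i else x * ((1 - p₀ i) / (1 - x))) :=
      le_antisymm hfinal_le hlb
    rw [hG, Finset.mul_sum, ← Finset.sum_add_distrib]
    refine Finset.sum_congr rfl fun i _ => ?_
    by_cases hpi : p₀ i ≤ x
    · rw [if_pos hpi, if_pos hpi, if_neg (not_lt.2 hpi), mul_zero, add_zero]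
    · rw [if_neg hpi, if_neg hpi, if_pos (not_le.1 hpi), zero_add]
      ring
  · -- degenerate regime
    intro x hx
    have hsubE : E ⊆ {ω | (⨅ t, ∑ i, if Y i ω = 1 then p i t ω else 0) ≤ x} := by
      intro ω hω
      obtain ⟨w, hw, _⟩ := (hEP ω hω).2.1
      have hTw : ω ∈ T w := hTwin ω hω w hw
      rw [Set.mem_setOf_eq, hMT w ω hTw]
      calc (⨅ t, p w t ω) ≤ p w 0 ω := ciInf_le (hBddp w ω) 0
        _ = p₀ w := hp0 w ω
        _ ≤ x := hx w
    have h1 : μ {ω | (⨅ t, ∑ i, if Y i ω = 1 then p i t ω else 0) ≤ x} = 1 :=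
      le_antisymm prob_le_one (by rw [← hμE]; exact measure_mono hsubE)
    rw [h1, ENNReal.toReal_one]
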